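/- arXiv:1903.09829 — 2 statements merged into one kernel-verified Lean document; each statement's English description precedes it below -/
import Mathlib

section
/- Let U_p = U_1 U_2 U_3† U_4† with U_j = e^{L_j}, where each L_j is anti-self-adjoint (L_j = i X_j, X_j self-adjoint N×N). If ‖L_j‖_{H-S} < N^{-1/2} for all j, then ‖U_p - 1‖²_{H-S} ≤ 4(1 + N² ∑_{j=1}^4 ‖L_j‖_{H-S} + N⁴ ∑_{j=1}^4 ‖L_j‖²_{H-S}) ∑_{j=1}^4 ‖L_j‖²_{H-S} ≤ [2(1 + 2N^{3/2})]² ∑_{j=1}^4 ‖L_j‖²_{H-S}. -/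
open Matrix

noncomputable def hsNormSq {N : ℕ} (M : Matrix (Fin N) (Fin N) ℂ) : ℝ :=
  (Mᴴ * M).trace.re

noncomputable def hsNorm {N : ℕ} (M : Matrix (Fin N) (Fin N) ℂ) : ℝ :=
  Real.sqrt (hsNormSq M)

-- scalar lemmas
example (θ : ℝ) : 2 - 2*Real.cos θ ≤ θ^2 := by
  nlinarith [Real.one_sub_sq_div_two_le_cos (x := θ)]

noncomputable def ff (θ : ℝ) : ℝ := θ^4/4 - θ^2 + 2*Real.cos θ + 2*θ*Real.sin θ - 2

lemma ff_deriv (θ : ℝ) : HasDerivAt ff (θ^3 - 2*θ + 2*θ*Real.cos θ) θ := by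
  unfold ff
  have h1 : HasDerivAt (fun θ : ℝ => θ^4/4) (θ^3) θ := by
    simpa using ((hasDerivAt_pow 4 θ).div_const 4)
  have h2 : HasDerivAt (fun θ : ℝ => θ^2) (2*θ) θ := by
    simpa using (hasDerivAt_pow 2 θ)
  have h3 : HasDerivAt (fun θ : ℝ => 2*Real.cos θ) (2*(-Real.sin θ)) θ :=
    (Real.hasDerivAt_cos θ).const_mul 2
  have h4 : HasDerivAt (fun θ : ℝ => 2*θ*Real.sin θ) (2*Real.sin θ + 2*θ*Real.cos θ) θ := by
    have := ((hasDerivAt_id θ).const_mul 2).mul (Real.hasDerivAt_sin θ)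
    exact this.congr_deriv (by simp only [id_eq]; ring)
  have := (((h1.sub h2).add h3).add h4).sub_const 2
  exact this.congr_deriv (by ring)

lemma ff_nonneg (θ : ℝ) : 0 ≤ ff θ := by
  have key : ∀ x : ℝ, 0 ≤ x → 0 ≤ ff x := by
    intro x hx
    have hmono : MonotoneOn ff (Set.Ici (0:ℝ)) := by
      apply monotoneOn_of_deriv_nonneg (convex_Ici 0)
      · exact fun y _ => (ff_deriv y).continuousAt.continuousWithinAt
      · intro y hy
        exact ((ff_deriv y).differentiableAt).differentiableWithinAt
      · intro y hy
        rw [(ff_deriv y).deriv]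
        simp only [interior_Ici, Set.mem_Ioi] at hy
        have := Real.one_sub_sq_div_two_le_cos (x := y)
        nlinarith
    have h0 : ff 0 = 0 := by simp [ff]
    have := hmono (Set.self_mem_Ici) (Set.mem_Ici.2 hx) hx
    linarith [h0 ▸ this]
  rcases le_or_gt 0 θ with h | h
  · exact key θ h
  · have := key (-θ) (by linarith)
    unfold ff at this ⊢
    simp only [Real.cos_neg, Real.sin_neg] at this
    nlinarith [this]

lemma scalar2 (θ : ℝ) : ‖Complex.exp (θ * Complex.I) - 1 - θ * Complex.I‖ ≤ θ^2/2 := by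
  have hre : (Complex.exp (θ * Complex.I) - 1 - θ * Complex.I).re = Real.cos θ - 1 := by
    simp [Complex.exp_ofReal_mul_I_re]
  have him : (Complex.exp (θ * Complex.I) - 1 - θ * Complex.I).im = Real.sin θ - θ := by
    simp [Complex.exp_ofReal_mul_I_im]
  rw [Complex.norm_def, Complex.normSq_apply, hre, him]
  have h := ff_nonneg θ
  unfold ff at h
  rw [show (Real.cos θ - 1) * (Real.cos θ - 1) + (Real.sin θ - θ) * (Real.sin θ - θ)
      = 2 - 2*Real.cos θ - 2*θ*Real.sin θ + θ^2 by
    nlinarith [Real.sin_sq_add_cos_sq θ]]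
  have : 2 - 2*Real.cos θ - 2*θ*Real.sin θ + θ^2 ≤ (θ^2/2)^2 := by nlinarith
  calc Real.sqrt (2 - 2*Real.cos θ - 2*θ*Real.sin θ + θ^2) ≤ Real.sqrt ((θ^2/2)^2) :=
        Real.sqrt_le_sqrt this
    _ = θ^2/2 := Real.sqrt_sq (by positivity)

lemma scalar1 (θ : ℝ) : ‖Complex.exp (θ * Complex.I) - 1‖ ≤ |θ| := by
  have hre : (Complex.exp (θ * Complex.I) - 1).re = Real.cos θ - 1 := by
    simp [Complex.exp_ofReal_mul_I_re]
  have him : (Complex.exp (θ * Complex.I) - 1).im = Real.sin θ := by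
    simp [Complex.exp_ofReal_mul_I_im]
  rw [Complex.norm_def, Complex.normSq_apply, hre, him]
  have h1 : (Real.cos θ - 1) * (Real.cos θ - 1) + Real.sin θ * Real.sin θ ≤ θ^2 := by
    nlinarith [Real.sin_sq_add_cos_sq θ, Real.one_sub_sq_div_two_le_cos (x := θ)]
  calc Real.sqrt _ ≤ Real.sqrt (θ^2) := Real.sqrt_le_sqrt h1
    _ = |θ| := Real.sqrt_sq_eq_abs θ

variable {N : ℕ}

lemma hsNormSq_eq_sum (M : Matrix (Fin N) (Fin N) ℂ) :
    hsNormSq M = ∑ i, ∑ j, ‖M j i‖ ^ 2 := by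
  unfold hsNormSq
  rw [Matrix.trace, Complex.re_sum]
  congr 1; ext i
  rw [Matrix.diag_apply, Matrix.mul_apply, Complex.re_sum]
  congr 1; ext j
  rw [Matrix.conjTranspose_apply]
  rw [Complex.sq_norm, Complex.normSq_apply, Complex.mul_re]
  simp only [Complex.star_def, Complex.conj_re, Complex.conj_im]
  ring

lemma hsNormSq_nonneg (M : Matrix (Fin N) (Fin N) ℂ) : 0 ≤ hsNormSq M := by
  rw [hsNormSq_eq_sum]; positivity

lemma hsNorm_nonneg (M : Matrix (Fin N) (Fin N) ℂ) : 0 ≤ hsNorm M := Real.sqrt_nonneg _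

lemma hsNorm_sq (M : Matrix (Fin N) (Fin N) ℂ) : hsNorm M ^ 2 = hsNormSq M :=
  Real.sq_sqrt (hsNormSq_nonneg M)

lemma hsNormSq_mul_left_unitary (U M : Matrix (Fin N) (Fin N) ℂ) (hU : Uᴴ * U = 1) :
    hsNormSq (U * M) = hsNormSq M := by
  unfold hsNormSq
  rw [Matrix.conjTranspose_mul, show Mᴴ * Uᴴ * (U * M) = Mᴴ * (Uᴴ * U) * M by
    rw [Matrix.mul_assoc, Matrix.mul_assoc, Matrix.mul_assoc], hU, Matrix.mul_one]

lemma hsNormSq_mul_right_unitary (U M : Matrix (Fin N) (Fin N) ℂ) (hU : Uᴴ * U = 1) :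
    hsNormSq (M * U) = hsNormSq M := by
  unfold hsNormSq
  have hU' : U * Uᴴ = 1 := mul_eq_one_comm.mp hU
  have h2 : Uᴴ * Mᴴ * (M * U) = Uᴴ * (Mᴴ * M) * U := by noncomm_ring
  rw [Matrix.conjTranspose_mul, h2, Matrix.trace_mul_cycle, hU', Matrix.one_mul]

lemma hsNorm_mul_left_unitary (U M : Matrix (Fin N) (Fin N) ℂ) (hU : Uᴴ * U = 1) :
    hsNorm (U * M) = hsNorm M := by
  unfold hsNorm; rw [hsNormSq_mul_left_unitary U M hU]

lemma hsNormSq_diagonal (v : Fin N → ℂ) :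
    hsNormSq (Matrix.diagonal v) = ∑ i, ‖v i‖ ^ 2 := by
  rw [hsNormSq_eq_sum]
  rw [Finset.sum_comm]
  congr 1; ext i
  rw [Finset.sum_eq_single i]
  · simp
  · intro b _ hb; simp [Matrix.diagonal_apply_ne' _ hb]
  · simp

lemma hsNormSq_conj_unitary (U M : Matrix (Fin N) (Fin N) ℂ) (hU : Uᴴ * U = 1) :
    hsNormSq (U * M * Uᴴ) = hsNormSq M := by
  rw [Matrix.mul_assoc, hsNormSq_mul_left_unitary _ _ hU,
    hsNormSq_mul_right_unitary _ _
      (by rw [Matrix.conjTranspose_conjTranspose]; exact mul_eq_one_comm.mp hU)]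

section Frobenius
attribute [local instance] Matrix.frobeniusSeminormedAddCommGroup
  Matrix.frobeniusNormedAddCommGroup Matrix.frobeniusNormedRing

lemma hsNorm_eq_norm (M : Matrix (Fin N) (Fin N) ℂ) : hsNorm M = ‖M‖ := by
  rw [Matrix.frobenius_norm_def, hsNorm, hsNormSq_eq_sum, Real.sqrt_eq_rpow]
  rw [Finset.sum_comm]
  congr 2
  ext i; congr 1; ext j
  rw [Real.rpow_two, sq]

lemma hsNorm_add_le (A B : Matrix (Fin N) (Fin N) ℂ) :
    hsNorm (A + B) ≤ hsNorm A + hsNorm B := by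
  simp only [hsNorm_eq_norm]; exact norm_add_le A B

lemma hsNorm_mul_le (A B : Matrix (Fin N) (Fin N) ℂ) :
    hsNorm (A * B) ≤ hsNorm A * hsNorm B := by
  simp only [hsNorm_eq_norm]; exact Matrix.frobenius_norm_mul A B

lemma hsNorm_neg (A : Matrix (Fin N) (Fin N) ℂ) : hsNorm (-A) = hsNorm A := by
  simp only [hsNorm_eq_norm]; exact norm_neg A

lemma hsNorm_sub_le (A B : Matrix (Fin N) (Fin N) ℂ) :
    hsNorm (A - B) ≤ hsNorm A + hsNorm B := by
  simp only [hsNorm_eq_norm]; exact norm_sub_le A B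

end Frobenius

open NormedSpace in
lemma exp_anti_decomp {A : Matrix (Fin N) (Fin N) ℂ} (h : Aᴴ = -A) :
    ∃ (V : Matrix (Fin N) (Fin N) ℂ) (lam : Fin N → ℝ),
      Vᴴ * V = 1 ∧
      A = V * Matrix.diagonal (fun k => (-(lam k) : ℝ) * Complex.I) * Vᴴ ∧
      exp A = V * Matrix.diagonal (fun k => Complex.exp ((-(lam k) : ℝ) * Complex.I)) * Vᴴ := by
  have hX : (Complex.I • A).IsHermitian := by
    unfold Matrix.IsHermitian
    rw [Matrix.conjTranspose_smul, h]
    simp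
  set V : Matrix (Fin N) (Fin N) ℂ := (hX.eigenvectorUnitary : Matrix (Fin N) (Fin N) ℂ) with hV
  have hVu : Vᴴ * V = 1 := by
    rw [← Matrix.star_eq_conjTranspose]
    exact Unitary.coe_star_mul_self hX.eigenvectorUnitary
  set lam : Fin N → ℝ := hX.eigenvalues with hlam
  have hspec : Complex.I • A = V * Matrix.diagonal (RCLike.ofReal ∘ lam) * Vᴴ := by
    rw [← Matrix.star_eq_conjTranspose]
    exact hX.spectral_theorem
  have hd2 : Matrix.diagonal (fun k => ((-(lam k) : ℝ) : ℂ) * Complex.I)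
      = (-Complex.I) • Matrix.diagonal (RCLike.ofReal ∘ lam) := by
    rw [← Matrix.diagonal_smul]
    ext i j
    rcases eq_or_ne i j with rfl | hij
    · simp only [Matrix.diagonal_apply_eq, Pi.smul_apply, Function.comp_apply, smul_eq_mul]
      have : (RCLike.ofReal (lam i) : ℂ) = ((lam i : ℝ) : ℂ) := rfl
      rw [this]
      push_cast
      ring
    · simp [Matrix.diagonal_apply_ne _ hij]
  have hdiag : A = V * Matrix.diagonal (fun k => (-(lam k) : ℝ) * Complex.I) * Vᴴ := by
    have h0 : A = (-Complex.I) • (Complex.I • A) := by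
      rw [smul_smul, show (-Complex.I) * Complex.I = 1 by simp [Complex.I_mul_I], one_smul]
    rw [h0, hspec, hd2, ← Matrix.smul_mul, ← Matrix.mul_smul]
  refine ⟨V, lam, hVu, hdiag, ?_⟩
  have hunit : IsUnit V := ⟨⟨V, Vᴴ, mul_eq_one_comm.mp hVu, hVu⟩, rfl⟩
  have hinv : V⁻¹ = Vᴴ := Matrix.inv_eq_left_inv hVu
  rw [hdiag, ← hinv, Matrix.exp_conj V _ hunit, Matrix.exp_diagonal, hinv]
  congr 2
  rw [Pi.exp_def]
  ext k
  rw [← Complex.exp_eq_exp_ℂ]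

open NormedSpace in
lemma exp_anti_unitary {A : Matrix (Fin N) (Fin N) ℂ} (h : Aᴴ = -A) :
    (exp A)ᴴ * exp A = 1 := by
  rw [← Matrix.exp_conjTranspose, h, ← Matrix.exp_add_of_commute (-A) A
    (Commute.neg_left (Commute.refl A)), neg_add_cancel, exp_zero]

open NormedSpace in
lemma exp_anti_bounds {A : Matrix (Fin N) (Fin N) ℂ} (h : Aᴴ = -A) :
    hsNorm (exp A - 1) ≤ hsNorm A ∧
      hsNorm (exp A - 1 - A) ≤ hsNormSq A / 2 := by
  obtain ⟨V, lam, hVu, hA, hexp⟩ := exp_anti_decomp h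
  have hVV : V * Vᴴ = 1 := mul_eq_one_comm.mp hVu
  have hone : (1 : Matrix (Fin N) (Fin N) ℂ) = V * 1 * Vᴴ := by
    rw [Matrix.mul_one, hVV]
  have hsqA : hsNormSq A = ∑ k, (lam k)^2 := by
    rw [hA, hsNormSq_conj_unitary _ _ hVu, hsNormSq_diagonal]
    congr 1; ext k
    rw [norm_mul, Complex.norm_I, mul_one, Complex.norm_real, Real.norm_eq_abs]
    rw [sq_abs, neg_pow]
    ring
  have key1 : exp A - 1 =
      V * Matrix.diagonal (fun k => Complex.exp ((-(lam k) : ℝ) * Complex.I) - 1) * Vᴴ := by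
    rw [hexp, hone]
    rw [← Matrix.diagonal_one, ← Matrix.diagonal_sub]
    noncomm_ring
  have key2 : exp A - 1 - A =
      V * Matrix.diagonal
        (fun k => Complex.exp ((-(lam k) : ℝ) * Complex.I) - 1 - (-(lam k) : ℝ) * Complex.I)
        * Vᴴ := by
    rw [hexp, hone, hA]
    rw [← Matrix.diagonal_one, ← Matrix.diagonal_sub, ← Matrix.diagonal_sub]
    noncomm_ring
  constructor
  · rw [hsNorm, key1, hsNormSq_conj_unitary _ _ hVu, hsNormSq_diagonal]
    rw [hsNorm, hsqA]
    apply Real.sqrt_le_sqrt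
    apply Finset.sum_le_sum
    intro k _
    have := scalar1 (-(lam k))
    calc ‖Complex.exp ((-(lam k) : ℝ) * Complex.I) - 1‖ ^ 2
        ≤ |(-(lam k))| ^ 2 := by
          apply pow_le_pow_left₀ (norm_nonneg _) this
      _ = (lam k)^2 := by rw [sq_abs, neg_pow]; ring
  · rw [hsNorm, key2, hsNormSq_conj_unitary _ _ hVu, hsNormSq_diagonal]
    have step1 : ∑ k, ‖
          Complex.exp ((-(lam k) : ℝ) * Complex.I) - 1 - (-(lam k) : ℝ) * Complex.I‖ ^ 2
        ≤ ∑ k, ((lam k)^2/2)^2 := by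
      apply Finset.sum_le_sum
      intro k _
      have := scalar2 (-(lam k))
      calc ‖Complex.exp ((-(lam k) : ℝ) * Complex.I) - 1 - (-(lam k) : ℝ) * Complex.I‖ ^ 2
          ≤ ((-(lam k))^2/2) ^ 2 := by
            apply pow_le_pow_left₀ (norm_nonneg _) this
        _ = ((lam k)^2/2)^2 := by rw [neg_pow]; ring
    have step2 : ∑ k, ((lam k)^2/2)^2 ≤ (∑ k, (lam k)^2/2)^2 := by
      apply Finset.sum_sq_le_sq_sum_of_nonneg
      intro k _; positivity
    calc Real.sqrt (∑ k, ‖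
          Complex.exp ((-(lam k) : ℝ) * Complex.I) - 1 - (-(lam k) : ℝ) * Complex.I‖ ^ 2)
        ≤ Real.sqrt ((∑ k, (lam k)^2/2)^2) := Real.sqrt_le_sqrt (step1.trans step2)
      _ = ∑ k, (lam k)^2/2 := Real.sqrt_sq (by positivity)
      _ = hsNormSq A / 2 := by rw [hsqA, Finset.sum_div]

lemma hsNormSq_neg (A : Matrix (Fin N) (Fin N) ℂ) : hsNormSq (-A) = hsNormSq A := by
  unfold hsNormSq
  rw [Matrix.conjTranspose_neg, Matrix.neg_mul, Matrix.mul_neg, neg_neg]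

lemma unitary_mul {A B : Matrix (Fin N) (Fin N) ℂ} (hA : Aᴴ * A = 1) (hB : Bᴴ * B = 1) :
    (A * B)ᴴ * (A * B) = 1 := by
  rw [Matrix.conjTranspose_mul]
  have : Bᴴ * Aᴴ * (A * B) = Bᴴ * (Aᴴ * A) * B := by noncomm_ring
  rw [this, hA, Matrix.mul_one, hB]


private lemma num0 (a0 a1 a2 a3 : ℝ) :
    (a0 + a1 + a2 + a3)^2 ≤ 4*(a0^2 + a1^2 + a2^2 + a3^2) := by
  nlinarith [sq_nonneg (a0 - a1), sq_nonneg (a0 - a2), sq_nonneg (a0 - a3),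
    sq_nonneg (a1 - a2), sq_nonneg (a1 - a3), sq_nonneg (a2 - a3)]

private lemma num1 {T s n2 n4 : ℝ} (hT : 0 ≤ T) (hs : 0 ≤ s) (h4 : T^2 ≤ 4*s)
    (h2 : 1 ≤ n2) (h4' : 1 ≤ n4) : (T + T^2/2)^2 ≤ 4*(1 + n2*T + n4*s)*s := by
  have e1 : T^3 ≤ 4*s*T := by nlinarith [mul_nonneg (by linarith : (0:ℝ) ≤ 4*s - T^2) hT]
  have e2 : T^4 ≤ 16*s^2 := by
    nlinarith [mul_nonneg (by linarith : (0:ℝ) ≤ 4*s - T^2) (by nlinarith : (0:ℝ) ≤ 4*s + T^2)]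
  nlinarith [mul_le_mul_of_nonneg_right h2 (mul_nonneg hT hs),
    mul_le_mul_of_nonneg_right h4' (mul_nonneg hs hs)]

private lemma num2 {c T s n2 n4 : ℝ} (hc : 0 ≤ c) (hs : 0 ≤ s)
    (h1 : n2*T ≤ 4*c) (h2 : n4*s ≤ 4*c^2) :
    4*(1 + n2*T + n4*s)*s ≤ (2*(1 + 2*c))^2*s := by
  have h : 4*(1 + n2*T + n4*s) ≤ (2*(1 + 2*c))^2 := by nlinarith
  exact mul_le_mul_of_nonneg_right h hs

set_option maxHeartbeats 1000000 in
theorem plaquette_quadratic_bound (N : ℕ) (L : Fin 4 → Matrix (Fin N) (Fin N) ℂ)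
    (hanti : ∀ j, (L j)ᴴ = -(L j))
    (hsmall : ∀ j, hsNorm (L j) < (Real.sqrt N)⁻¹)
    (Up : Matrix (Fin N) (Fin N) ℂ)
    (hUp : Up = NormedSpace.exp (L 0) * NormedSpace.exp (L 1) *
      (NormedSpace.exp (L 2))ᴴ * (NormedSpace.exp (L 3))ᴴ) :
    hsNormSq (Up - 1) ≤
        4 * (1 + (N : ℝ) ^ 2 * ∑ j, hsNorm (L j) + (N : ℝ) ^ 4 * ∑ j, hsNormSq (L j)) *
          ∑ j, hsNormSq (L j) ∧
      4 * (1 + (N : ℝ) ^ 2 * ∑ j, hsNorm (L j) + (N : ℝ) ^ 4 * ∑ j, hsNormSq (L j)) *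
          ∑ j, hsNormSq (L j) ≤
        (2 * (1 + 2 * (N : ℝ) ^ ((3 : ℝ) / 2))) ^ 2 * ∑ j, hsNormSq (L j) := by
  rcases Nat.eq_zero_or_pos N with rfl | hNpos
  · -- trivial case N = 0
    have hz : ∀ M : Matrix (Fin 0) (Fin 0) ℂ, hsNormSq M = 0 := by
      intro M; rw [hsNormSq_eq_sum]; simp
    have hz2 : ∑ j, hsNormSq (L j) = 0 := by simp [hz]
    rw [hz, hz2]
    norm_num
  -- main case
  have hN1 : (1 : ℝ) ≤ (N : ℝ) := by exact_mod_cast hNpos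
  set a0 := hsNorm (L 0) with ha0
  set a1 := hsNorm (L 1) with ha1
  set a2 := hsNorm (L 2) with ha2
  set a3 := hsNorm (L 3) with ha3
  have ha0n : 0 ≤ a0 := hsNorm_nonneg _
  have ha1n : 0 ≤ a1 := hsNorm_nonneg _
  have ha2n : 0 ≤ a2 := hsNorm_nonneg _
  have ha3n : 0 ≤ a3 := hsNorm_nonneg _
  set E0 := NormedSpace.exp (L 0) with hE0
  set E1 := NormedSpace.exp (L 1) with hE1
  set E2 := NormedSpace.exp (-(L 2)) with hE2
  set E3 := NormedSpace.exp (-(L 3)) with hE3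
  have hanti2 : (-(L 2))ᴴ = -(-(L 2)) := by rw [Matrix.conjTranspose_neg, hanti 2]
  have hanti3 : (-(L 3))ᴴ = -(-(L 3)) := by rw [Matrix.conjTranspose_neg, hanti 3]
  have hUp' : Up = E0 * E1 * E2 * E3 := by
    rw [hUp, hE0, hE1, hE2, hE3, ← Matrix.exp_conjTranspose, ← Matrix.exp_conjTranspose,
      hanti 2, hanti 3]
  -- basic bounds
  have hd0 : hsNorm (E0 - 1) ≤ a0 := (exp_anti_bounds (hanti 0)).1
  have hd1 : hsNorm (E1 - 1) ≤ a1 := (exp_anti_bounds (hanti 1)).1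
  have hd2 : hsNorm (E2 - 1) ≤ a2 := by
    have := (exp_anti_bounds hanti2).1
    rwa [hsNorm_neg] at this
  have hd3 : hsNorm (E3 - 1) ≤ a3 := by
    have := (exp_anti_bounds hanti3).1
    rwa [hsNorm_neg] at this
  have hr0 : hsNorm (E0 - 1 - L 0) ≤ a0^2/2 := by
    have := (exp_anti_bounds (hanti 0)).2; rwa [← hsNorm_sq] at this
  have hr1 : hsNorm (E1 - 1 - L 1) ≤ a1^2/2 := by
    have := (exp_anti_bounds (hanti 1)).2; rwa [← hsNorm_sq] at this
  have hr2 : hsNorm (E2 - 1 - (-(L 2))) ≤ a2^2/2 := by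
    have := (exp_anti_bounds hanti2).2; rwa [hsNormSq_neg, ← hsNorm_sq] at this
  have hr3 : hsNorm (E3 - 1 - (-(L 3))) ≤ a3^2/2 := by
    have := (exp_anti_bounds hanti3).2; rwa [hsNormSq_neg, ← hsNorm_sq] at this
  have hU0 : E0ᴴ * E0 = 1 := exp_anti_unitary (hanti 0)
  have hU1 : E1ᴴ * E1 = 1 := exp_anti_unitary (hanti 1)
  have hU2 : E2ᴴ * E2 = 1 := exp_anti_unitary hanti2
  have hU01 : (E0 * E1)ᴴ * (E0 * E1) = 1 := unitary_mul hU0 hU1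
  have hU012 : (E0 * E1 * E2)ᴴ * (E0 * E1 * E2) = 1 := unitary_mul hU01 hU2
  -- partial product bounds
  have h01 : hsNorm (E0 * E1 - 1) ≤ a0 + a1 := by
    have hid : E0 * E1 - 1 = E0 * (E1 - 1) + (E0 - 1) := by noncomm_ring
    rw [hid]
    refine (hsNorm_add_le _ _).trans ?_
    rw [hsNorm_mul_left_unitary _ _ hU0]
    linarith
  have h012 : hsNorm (E0 * E1 * E2 - 1) ≤ a0 + a1 + a2 := by
    have hid : E0 * E1 * E2 - 1 = (E0 * E1) * (E2 - 1) + (E0 * E1 - 1) := by noncomm_ring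
    rw [hid]
    refine (hsNorm_add_le _ _).trans ?_
    rw [hsNorm_mul_left_unitary _ _ hU01]
    linarith
  -- cross terms
  have t1 : hsNorm ((E0 - 1) * (E1 - 1)) ≤ a0 * a1 :=
    (hsNorm_mul_le _ _).trans (mul_le_mul hd0 hd1 (hsNorm_nonneg _) ha0n)
  have t2 : hsNorm ((E0 * E1 - 1) * (E2 - 1)) ≤ (a0 + a1) * a2 :=
    (hsNorm_mul_le _ _).trans (mul_le_mul h01 hd2 (hsNorm_nonneg _) (by linarith))
  have t3 : hsNorm ((E0 * E1 * E2 - 1) * (E3 - 1)) ≤ (a0 + a1 + a2) * a3 :=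
    (hsNorm_mul_le _ _).trans (mul_le_mul h012 hd3 (hsNorm_nonneg _) (by linarith))
  -- remainder identity
  set S : Matrix (Fin N) (Fin N) ℂ := L 0 + L 1 + (-(L 2)) + (-(L 3)) with hS
  have hRid : Up - 1 - S =
      (E0 - 1 - L 0) + (E1 - 1 - L 1) + (E2 - 1 - (-(L 2))) + (E3 - 1 - (-(L 3)))
        + (E0 - 1) * (E1 - 1) + (E0 * E1 - 1) * (E2 - 1)
        + (E0 * E1 * E2 - 1) * (E3 - 1) := by
    rw [hUp', hS]; noncomm_ring
  set T := a0 + a1 + a2 + a3 with hT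
  set s := a0^2 + a1^2 + a2^2 + a3^2 with hs
  have hRb : hsNorm (Up - 1 - S) ≤ T^2/2 := by
    rw [hRid]
    have step := (hsNorm_add_le _ _).trans (add_le_add
      ((hsNorm_add_le _ _).trans (add_le_add
        ((hsNorm_add_le _ _).trans (add_le_add
          ((hsNorm_add_le _ _).trans (add_le_add
            ((hsNorm_add_le _ _).trans (add_le_add
              ((hsNorm_add_le _ _).trans (add_le_add hr0 hr1)) hr2)) hr3))
            t1)) t2)) t3)
    refine step.trans (le_of_eq ?_)
    rw [hT]; ring
  have hSb : hsNorm S ≤ T := by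
    rw [hS, hT]
    refine (hsNorm_add_le _ _).trans ?_
    have := (hsNorm_add_le (L 0 + L 1) (-(L 2)))
    have h2 := (hsNorm_add_le (L 0) (L 1))
    rw [hsNorm_neg] at this ⊢
    linarith
  have hUpb : hsNorm (Up - 1) ≤ T + T^2/2 := by
    have hid : Up - 1 = S + (Up - 1 - S) := by abel
    rw [hid]
    exact (hsNorm_add_le _ _).trans (add_le_add hSb hRb)
  -- numeric part
  have hT4 : T^2 ≤ 4*s := by rw [hT, hs]; exact num0 a0 a1 a2 a3
  have hTn : 0 ≤ T := by rw [hT]; linarith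
  have hsn : 0 ≤ s := by rw [hs]; positivity
  have hsumn : ∑ j, hsNorm (L j) = T := by rw [Fin.sum_univ_four, hT]
  have hsumsq : ∑ j, hsNormSq (L j) = s := by
    rw [Fin.sum_univ_four, hs, ← hsNorm_sq, ← hsNorm_sq, ← hsNorm_sq, ← hsNorm_sq]
  rw [hsumn, hsumsq]
  have hN2 : (1:ℝ) ≤ (N:ℝ)^2 := one_le_pow₀ hN1
  have hN4 : (1:ℝ) ≤ (N:ℝ)^4 := one_le_pow₀ hN1
  constructor
  · -- first inequality
    have hUp2 : hsNormSq (Up - 1) ≤ (T + T^2/2)^2 := by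
      rw [← hsNorm_sq]
      exact pow_le_pow_left₀ (hsNorm_nonneg _) hUpb 2
    exact hUp2.trans (num1 hTn hsn hT4 hN2 hN4)
  · -- second inequality
    set c := (N : ℝ) ^ ((3:ℝ)/2) with hc
    have hNr : (0:ℝ) < (N:ℝ) := by exact_mod_cast hNpos
    have hsqrt : Real.sqrt (N:ℝ) = (N:ℝ) ^ ((1:ℝ)/2) := Real.sqrt_eq_rpow _
    have hkey1 : (N:ℝ)^2 * (Real.sqrt (N:ℝ))⁻¹ = c := by
      rw [hsqrt, hc, ← Real.rpow_neg hNr.le, ← Real.rpow_natCast (N:ℝ) 2,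
        ← Real.rpow_add hNr]
      norm_num
    have hkey2 : (N:ℝ)^4 * ((Real.sqrt (N:ℝ))⁻¹)^2 = c^2 := by
      rw [hsqrt, hc, ← Real.rpow_neg hNr.le,
        ← Real.rpow_natCast ((N:ℝ) ^ (-((1:ℝ)/2))) 2, ← Real.rpow_mul hNr.le,
        ← Real.rpow_natCast (N:ℝ) 4, ← Real.rpow_add hNr,
        ← Real.rpow_natCast ((N:ℝ) ^ ((3:ℝ)/2)) 2, ← Real.rpow_mul hNr.le]
      norm_num
    have hcpos : 0 ≤ c := Real.rpow_nonneg hNr.le _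
    -- bounds on T and s
    have hTb : T ≤ 4 * (Real.sqrt (N:ℝ))⁻¹ := by
      rw [hT]
      have := hsmall 0; have := hsmall 1; have := hsmall 2; have := hsmall 3
      linarith [hsmall 0, hsmall 1, hsmall 2, hsmall 3]
    have hsb : s ≤ 4 * ((Real.sqrt (N:ℝ))⁻¹)^2 := by
      rw [hs]
      have i0 : a0^2 ≤ ((Real.sqrt (N:ℝ))⁻¹)^2 := pow_le_pow_left₀ ha0n (hsmall 0).le 2
      have i1 : a1^2 ≤ ((Real.sqrt (N:ℝ))⁻¹)^2 := pow_le_pow_left₀ ha1n (hsmall 1).le 2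
      have i2 : a2^2 ≤ ((Real.sqrt (N:ℝ))⁻¹)^2 := pow_le_pow_left₀ ha2n (hsmall 2).le 2
      have i3 : a3^2 ≤ ((Real.sqrt (N:ℝ))⁻¹)^2 := pow_le_pow_left₀ ha3n (hsmall 3).le 2
      linarith
    have hterm1 : (N:ℝ)^2 * T ≤ 4 * c := by
      calc (N:ℝ)^2 * T ≤ (N:ℝ)^2 * (4 * (Real.sqrt (N:ℝ))⁻¹) :=
            mul_le_mul_of_nonneg_left hTb (by positivity)
        _ = 4 * ((N:ℝ)^2 * (Real.sqrt (N:ℝ))⁻¹) := by ring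
        _ = 4 * c := by rw [hkey1]
    have hterm2 : (N:ℝ)^4 * s ≤ 4 * c^2 := by
      calc (N:ℝ)^4 * s ≤ (N:ℝ)^4 * (4 * ((Real.sqrt (N:ℝ))⁻¹)^2) :=
            mul_le_mul_of_nonneg_left hsb (by positivity)
        _ = 4 * ((N:ℝ)^4 * ((Real.sqrt (N:ℝ))⁻¹)^2) := by ring
        _ = 4 * c^2 := by rw [hkey2]
    exact num2 hcpos hsn hterm1 hterm2
end

section
/- In the hypercubic lattice with L sites on a side in dimension d, the set of enhanced-temporal-gauge bonds (all temporal bonds; for d ≥ 2 additionally the direction-1 bonds in the hyperplane x⁰ = 1; for d ≥ 3 the direction-2 bonds with x⁰ = x¹ = 1; for d = 4 the direction-3 bonds with x⁰ = x¹ = x² = 1) forms a spanning tree of the lattice graph: it is connected, touches every site, and contains no cycles. -/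
/-- The nearest-neighbor hypercubic lattice graph on `{0,...,L-1}^d`. -/
def latticeGraph (d L : ℕ) : SimpleGraph (Fin d → Fin L) :=
  SimpleGraph.fromRel (fun x y => ∃ ν : Fin d,
    (∀ i, i ≠ ν → x i = y i) ∧ ((x ν : ℕ) + 1 = (y ν : ℕ)))

/-- The enhanced temporal gauge bond graph: a bond in direction `ν` is gauged away
iff all earlier coordinates of its initial site are at the lattice boundary value `0`. -/
def gaugeTreeGraph (d L : ℕ) : SimpleGraph (Fin d → Fin L) :=
  SimpleGraph.fromRel (fun x y => ∃ ν : Fin d,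
    (∀ i, i ≠ ν → x i = y i) ∧ ((x ν : ℕ) + 1 = (y ν : ℕ)) ∧
      (∀ i, i < ν → (x i : ℕ) = 0))

open SimpleGraph

/-- In a graph graded by `f` (each edge changes `f` by exactly one) in which every vertex
has at most one lower neighbor, there is no cycle through a vertex of maximal grade. -/
lemma no_cycle_at_max {V : Type*} {G : SimpleGraph V} (f : V → ℕ)
    (hA : ∀ a b, G.Adj a b → f a + 1 = f b ∨ f b + 1 = f a)
    (hB : ∀ u a b, G.Adj u a → G.Adj u b → f a + 1 = f u → f b + 1 = f u → a = b)
    {u : V} (c : G.Walk u u) (hmax : ∀ x ∈ c.support, f x ≤ f u) : ¬ c.IsCycle := by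
  intro hc
  cases c with
  | nil => simp [Walk.isCycle_def] at hc
  | @cons _ x _ h q =>
    have hlen := hc.three_le_length
    have hqnil : ¬ q.Nil := by
      rw [Walk.nil_iff_length_eq]
      simp only [Walk.length_cons] at hlen
      omega
    have hqrnil : ¬ q.reverse.Nil := by
      rwa [Walk.not_nil_iff_lt_length, Walk.length_reverse, ← Walk.not_nil_iff_lt_length]
    obtain ⟨y, h', r, hqr⟩ := Walk.not_nil_iff.mp hqrnil
    -- h : G.Adj u x, h' : G.Adj u y (from the reversed walk)
    have hxmem : x ∈ (Walk.cons h q).support := by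
      simp [Walk.support_cons, q.start_mem_support]
    have hymem : y ∈ (Walk.cons h q).support := by
      have : y ∈ q.reverse.support := by rw [hqr]; simp [Walk.support_cons]
      rw [Walk.support_reverse, List.mem_reverse] at this
      simp [Walk.support_cons, this]
    have hfx : f x + 1 = f u := by
      rcases hA u x h with h1 | h1
      · have := hmax x hxmem; omega
      · exact h1
    have hfy : f y + 1 = f u := by
      rcases hA u y h' with h1 | h1
      · have := hmax y hymem; omega
      · exact h1
    have hxy : x = y := hB u x y h h' hfx hfy
    have hnodup : (Walk.cons h q).edges.Nodup := hc.isCircuit.isTrail.edges_nodup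
    rw [Walk.edges_cons, List.nodup_cons] at hnodup
    apply hnodup.1
    have : s(u, y) ∈ q.reverse.edges := by rw [hqr]; simp
    rw [Walk.edges_reverse, List.mem_reverse] at this
    exact hxy ▸ this

/-- Acyclicity for graded graphs with unique lower neighbors. -/
lemma acyclic_of_graded {V : Type*} {G : SimpleGraph V} (f : V → ℕ)
    (hA : ∀ a b, G.Adj a b → f a + 1 = f b ∨ f b + 1 = f a)
    (hB : ∀ u a b, G.Adj u a → G.Adj u b → f a + 1 = f u → f b + 1 = f u → a = b) :
    G.IsAcyclic := by
  classical
  intro v c hc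
  have hne : (c.support.toFinset : Finset V).Nonempty :=
    ⟨v, by simp [c.start_mem_support]⟩
  obtain ⟨u, hus, hmaxu⟩ := Finset.exists_max_image c.support.toFinset f hne
  rw [List.mem_toFinset] at hus
  refine no_cycle_at_max f hA hB (c.rotate u hus) ?_ (hc.rotate hus)
  intro x hx
  have hx' : x ∈ c.support := by
    rw [(c.rotate u hus).support_eq_cons] at hx
    rcases List.mem_cons.mp hx with rfl | hx
    · exact hus
    · exact List.mem_of_mem_tail ((c.support_rotate u hus).mem_iff.mp hx)
  exact hmaxu x (List.mem_toFinset.mpr hx')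

lemma gauge_rel_sum {d L : ℕ} {x y : Fin d → Fin L} (ν : Fin d)
    (hoff : ∀ i, i ≠ ν → x i = y i) (hν : (x ν : ℕ) + 1 = (y ν : ℕ)) :
    (∑ i, (x i : ℕ)) + 1 = ∑ i, (y i : ℕ) := by
  have key : ∀ i, (y i : ℕ) = (x i : ℕ) + if i = ν then 1 else 0 := by
    intro i
    by_cases hi : i = ν
    · subst hi; simp [← hν]
    · simp [hi, hoff i hi]
  rw [Finset.sum_congr rfl fun i _ => key i, Finset.sum_add_distrib,
    Finset.sum_ite_eq' Finset.univ ν fun _ => 1]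
  simp

theorem gauge_tree_is_spanning_tree (d L : ℕ) (hL : 1 ≤ L) :
    (gaugeTreeGraph d L).Connected ∧ (gaugeTreeGraph d L).IsAcyclic ∧
      gaugeTreeGraph d L ≤ latticeGraph d L := by
  set f : (Fin d → Fin L) → ℕ := fun x => ∑ i, (x i : ℕ) with hf
  have hA : ∀ a b, (gaugeTreeGraph d L).Adj a b → f a + 1 = f b ∨ f b + 1 = f a := by
    intro a b hab
    rw [gaugeTreeGraph, fromRel_adj] at hab
    rcases hab.2 with ⟨ν, h1, h2, _⟩ | ⟨ν, h1, h2, _⟩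
    · exact Or.inl (gauge_rel_sum ν h1 h2)
    · exact Or.inr (gauge_rel_sum ν h1 h2)
  have hB : ∀ u a b, (gaugeTreeGraph d L).Adj u a → (gaugeTreeGraph d L).Adj u b →
      f a + 1 = f u → f b + 1 = f u → a = b := by
    intro u a b hua hub hfa hfb
    rw [gaugeTreeGraph, fromRel_adj] at hua hub
    have hra : ∃ ν : Fin d, (∀ i, i ≠ ν → a i = u i) ∧ ((a ν : ℕ) + 1 = (u ν : ℕ)) ∧
        (∀ i, i < ν → (a i : ℕ) = 0) := by
      rcases hua.2 with h | h
      · obtain ⟨ν, h1, h2, _⟩ := h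
        have h3 := gauge_rel_sum ν h1 h2
        have hfa' : (∑ i, (a i : ℕ)) + 1 = ∑ i, (u i : ℕ) := hfa
        omega
      · exact h
    have hrb : ∃ ν : Fin d, (∀ i, i ≠ ν → b i = u i) ∧ ((b ν : ℕ) + 1 = (u ν : ℕ)) ∧
        (∀ i, i < ν → (b i : ℕ) = 0) := by
      rcases hub.2 with h | h
      · obtain ⟨ν, h1, h2, _⟩ := h
        have h3 := gauge_rel_sum ν h1 h2
        have hfb' : (∑ i, (b i : ℕ)) + 1 = ∑ i, (u i : ℕ) := hfb
        omega
      · exact h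
    obtain ⟨ν, ha1, ha2, ha3⟩ := hra
    obtain ⟨μ, hb1, hb2, hb3⟩ := hrb
    have hνμ : ν = μ := by
      rcases lt_trichotomy ν μ with h | h | h
      · exfalso
        have h0 : (b ν : ℕ) = 0 := hb3 ν h
        have h1 : b ν = u ν := hb1 ν (ne_of_lt h)
        rw [h1] at h0
        omega
      · exact h
      · exfalso
        have h0 : (a μ : ℕ) = 0 := ha3 μ h
        have h1 : a μ = u μ := ha1 μ (ne_of_lt h)
        rw [h1] at h0
        omega
    subst hνμ
    funext i
    by_cases hi : i = ν
    · subst hi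
      exact Fin.ext (by omega)
    · rw [ha1 i hi, hb1 i hi]
  haveI : Nonempty (Fin L) := ⟨⟨0, hL⟩⟩
  set z : Fin d → Fin L := fun _ => ⟨0, hL⟩ with hz
  have key : ∀ n (x : Fin d → Fin L), f x ≤ n → (gaugeTreeGraph d L).Reachable x z := by
    intro n
    induction n with
    | zero =>
      intro x hx
      have hx0 : ∀ i, (x i : ℕ) = 0 := by
        intro i
        have := Finset.sum_eq_zero_iff.mp (Nat.le_zero.mp hx) i (Finset.mem_univ i)
        exact this
      have : x = z := by
        funext i
        exact Fin.ext (by simp [hz, hx0 i])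
      rw [this]
    | succ n ih =>
      intro x hx
      by_cases hx0 : f x = 0
      · have hx0' : ∀ i, (x i : ℕ) = 0 := fun i =>
          Finset.sum_eq_zero_iff.mp hx0 i (Finset.mem_univ i)
        have : x = z := by
          funext i
          exact Fin.ext (by simp [hz, hx0' i])
        rw [this]
      · have hS : (Finset.univ.filter fun i => (x i : ℕ) ≠ 0).Nonempty := by
          by_contra hempty
          apply hx0
          rw [Finset.not_nonempty_iff_eq_empty, Finset.filter_eq_empty_iff] at hempty
          exact Finset.sum_eq_zero fun i _ => by
            have := hempty (Finset.mem_univ i); simpa using this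
        set ν := (Finset.univ.filter fun i => (x i : ℕ) ≠ 0).min' hS with hνdef
        have hν : (x ν : ℕ) ≠ 0 := by
          have := (Finset.univ.filter fun i => (x i : ℕ) ≠ 0).min'_mem hS
          simp only [Finset.mem_filter] at this
          exact this.2
        have hmin : ∀ i, i < ν → (x i : ℕ) = 0 := by
          intro i hi
          by_contra hne
          exact absurd (Finset.min'_le _ i (by simp [hne])) (not_le.mpr hi)
        set y : Fin d → Fin L :=
          Function.update x ν ⟨(x ν : ℕ) - 1, by have := (x ν).isLt; omega⟩ with hy
        have hyν : (y ν : ℕ) = (x ν : ℕ) - 1 := by simp [hy]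
        have hyoff : ∀ i, i ≠ ν → y i = x i := fun i hi => Function.update_of_ne hi _ _
        have hrel : (gaugeTreeGraph d L).Adj y x := by
          rw [gaugeTreeGraph, fromRel_adj]
          constructor
          · intro heq
            apply hν
            have : (y ν : ℕ) = (x ν : ℕ) := by rw [heq]
            omega
          · left
            exact ⟨ν, hyoff, by omega, fun i hi => by rw [hyoff i (ne_of_lt hi)]; exact hmin i hi⟩
        have hfy : f y + 1 = f x := gauge_rel_sum ν hyoff (by omega)
        exact (hrel.symm.reachable).trans (ih y (by omega))
  refine ⟨?_, acyclic_of_graded f hA hB, ?_⟩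
  · haveI : Nonempty (Fin d → Fin L) := ⟨z⟩
    exact ⟨fun a b => (key _ a le_rfl).trans (key _ b le_rfl).symm⟩
  · intro a b hab
    rw [gaugeTreeGraph, fromRel_adj] at hab
    rw [latticeGraph, fromRel_adj]
    refine ⟨hab.1, ?_⟩
    rcases hab.2 with ⟨ν, h1, h2, _⟩ | ⟨ν, h1, h2, _⟩
    · exact Or.inl ⟨ν, h1, h2⟩
    · exact Or.inr ⟨ν, h1, h2⟩
end
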